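/- The call-by-value variant of adequacy: defining ‖A→B‖v = { v·e | v ∈ |A|v, e ∈ ‖B‖ } (truth *value* witnesses for the argument) and environments mapping variables to truth value witnesses, if Γ ⊢ t : A and σ(x) ∈ |B|v for each (x:B) ∈ Γ, then the call-by-value translation ⟦t⟧ (with ⟦t u⟧ = μα.⟨⟦u⟧ | μ̃v.⟨⟦t⟧ | v·α⟩⟩) satisfies ⟦t⟧[σ] ∈ |A|. -/

import Mathlib

mutual
/-- μμ̃ machine terms. -/
inductive MTm where
  | var : Nat → MTm
  | mu : MMach → MTm            -- μα.m, binds co-variable 0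
  | muPair : MMach → MTm        -- μ(x·α).m, binds variable 0 and co-variable 0
  | injl : MTm → MTm
  | injr : MTm → MTm
/-- μμ̃ machine co-terms (contexts). -/
inductive MCo where
  | covar : Nat → MCo
  | cons : MTm → MCo → MCo      -- t·e
  | mutilde : MMach → MCo       -- μ̃x.m, binds variable 0
  | case : MMach → MMach → MCo  -- μ̃[inj₁x₁.m₁ | inj₂x₂.m₂], each branch binds variable 0
/-- μμ̃ machine configurations ⟨t | e⟩. -/
inductive MMach where
  | conf : MTm → MCo → MMach
end

/-- Lift a renaming under a binder. -/
def liftN (f : Nat → Nat) : Nat → Nat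
  | 0 => 0
  | n + 1 => f n + 1

mutual
/-- Simultaneous renaming of variables (ft) and co-variables (fc). -/
def MTm.rename (ft fc : Nat → Nat) : MTm → MTm
  | .var n => .var (ft n)
  | .mu m => .mu (MMach.rename ft (liftN fc) m)
  | .muPair m => .muPair (MMach.rename (liftN ft) (liftN fc) m)
  | .injl t => .injl (MTm.rename ft fc t)
  | .injr t => .injr (MTm.rename ft fc t)
def MCo.rename (ft fc : Nat → Nat) : MCo → MCo
  | .covar n => .covar (fc n)
  | .cons t e => .cons (MTm.rename ft fc t) (MCo.rename ft fc e)
  | .mutilde m => .mutilde (MMach.rename (liftN ft) fc m)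
  | .case m₁ m₂ => .case (MMach.rename (liftN ft) fc m₁) (MMach.rename (liftN ft) fc m₂)
def MMach.rename (ft fc : Nat → Nat) : MMach → MMach
  | .conf t e => .conf (MTm.rename ft fc t) (MCo.rename ft fc e)
end

/-- Lift a substitution under a variable binder. -/
def upT (σt : Nat → MTm) (σc : Nat → MCo) : (Nat → MTm) × (Nat → MCo) :=
  (fun n => match n with
    | 0 => .var 0
    | n + 1 => MTm.rename Nat.succ id (σt n),
   fun n => MCo.rename Nat.succ id (σc n))

/-- Lift a substitution under a co-variable binder. -/
def upC (σt : Nat → MTm) (σc : Nat → MCo) : (Nat → MTm) × (Nat → MCo) :=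
  (fun n => MTm.rename id Nat.succ (σt n),
   fun n => match n with
    | 0 => .covar 0
    | n + 1 => MCo.rename id Nat.succ (σc n))

mutual
/-- Simultaneous substitution of terms for variables and co-terms for co-variables. -/
def MTm.subst (σt : Nat → MTm) (σc : Nat → MCo) : MTm → MTm
  | .var n => σt n
  | .mu m => .mu (MMach.subst (upC σt σc).1 (upC σt σc).2 m)
  | .muPair m =>
      .muPair (MMach.subst (upT (upC σt σc).1 (upC σt σc).2).1
                           (upT (upC σt σc).1 (upC σt σc).2).2 m)
  | .injl t => .injl (MTm.subst σt σc t)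
  | .injr t => .injr (MTm.subst σt σc t)
def MCo.subst (σt : Nat → MTm) (σc : Nat → MCo) : MCo → MCo
  | .covar n => σc n
  | .cons t e => .cons (MTm.subst σt σc t) (MCo.subst σt σc e)
  | .mutilde m => .mutilde (MMach.subst (upT σt σc).1 (upT σt σc).2 m)
  | .case m₁ m₂ => .case (MMach.subst (upT σt σc).1 (upT σt σc).2 m₁)
                         (MMach.subst (upT σt σc).1 (upT σt σc).2 m₂)
def MMach.subst (σt : Nat → MTm) (σc : Nat → MCo) : MMach → MMach
  | .conf t e => .conf (MTm.subst σt σc t) (MCo.subst σt σc e)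
end

/-- m[e/α] : substitute co-term `e` for co-variable 0. -/
def MMach.substCo (m : MMach) (e : MCo) : MMach :=
  MMach.subst MTm.var (fun n => match n with | 0 => e | n + 1 => .covar n) m

/-- m[t/x] : substitute term `t` for variable 0. -/
def MMach.substTm (m : MMach) (t : MTm) : MMach :=
  MMach.subst (fun n => match n with | 0 => t | n + 1 => .var n) MCo.covar m

/-- m[t/x, e/α] : substitute both a term and a co-term. -/
def MMach.substTmCo (m : MMach) (t : MTm) (e : MCo) : MMach :=
  MMach.subst (fun n => match n with | 0 => t | n + 1 => .var n)
              (fun n => match n with | 0 => e | n + 1 => .covar n) m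

mutual
/-- Reduction of μμ̃ terms (congruence). -/
inductive StepT : MTm → MTm → Prop
  | mu {m m'} : StepM m m' → StepT (.mu m) (.mu m')
  | muPair {m m'} : StepM m m' → StepT (.muPair m) (.muPair m')
  | injl {t t'} : StepT t t' → StepT (.injl t) (.injl t')
  | injr {t t'} : StepT t t' → StepT (.injr t) (.injr t')
/-- Reduction of μμ̃ co-terms (congruence). -/
inductive StepC : MCo → MCo → Prop
  | consl {t t'} (e) : StepT t t' → StepC (.cons t e) (.cons t' e)
  | consr (t) {e e'} : StepC e e' → StepC (.cons t e) (.cons t e')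
  | mutilde {m m'} : StepM m m' → StepC (.mutilde m) (.mutilde m')
  | casel {m₁ m₁'} (m₂) : StepM m₁ m₁' → StepC (.case m₁ m₂) (.case m₁' m₂)
  | caser (m₁) {m₂ m₂'} : StepM m₂ m₂' → StepC (.case m₁ m₂) (.case m₁ m₂')
/-- Reduction of μμ̃ machine configurations. -/
inductive StepM : MMach → MMach → Prop
  | mu (m : MMach) (e : MCo) : StepM (.conf (.mu m) e) (m.substCo e)
  | mutilde (t : MTm) (m : MMach) : StepM (.conf t (.mutilde m)) (m.substTm t)
  | muPair (m : MMach) (u : MTm) (e : MCo) :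
      StepM (.conf (.muPair m) (.cons u e)) (m.substTmCo u e)
  | casel (t : MTm) (m₁ m₂ : MMach) :
      StepM (.conf (.injl t) (.case m₁ m₂)) (m₁.substTm t)
  | caser (t : MTm) (m₁ m₂ : MMach) :
      StepM (.conf (.injr t) (.case m₁ m₂)) (m₂.substTm t)
  | congT {t t'} (e) : StepT t t' → StepM (.conf t e) (.conf t' e)
  | congC (t) {e e'} : StepC e e' → StepM (.conf t e) (.conf t e')
end

/-- Source λ-calculus with sums (de Bruijn). In `case t u₁ u₂` each branch binds
variable 0. -/
inductive LTm where
  | var : Nat → LTm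
  | lam : LTm → LTm
  | app : LTm → LTm → LTm
  | injl : LTm → LTm
  | injr : LTm → LTm
  | case : LTm → LTm → LTm → LTm

/-- Compilation of λ-terms with sums into the μμ̃ machine (call-by-name). -/
def transl : LTm → MTm
  | .var n => .var n
  | .lam t => .muPair (.conf (transl t) (.covar 0))
  | .app t u => .mu (.conf (transl t) (.cons (transl u) (.covar 0)))
  | .injl t => .injl (transl t)
  | .injr t => .injr (transl t)
  | .case t u₁ u₂ =>
      .mu (.conf (transl t)
        (.case (.conf (transl u₁) (.covar 0)) (.conf (transl u₂) (.covar 0))))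

/-- Simple types: a (positive) base type, function types and sum types. -/
inductive Ty where
  | base : Ty
  | arrow : Ty → Ty → Ty
  | sum : Ty → Ty → Ty

/-- Typing judgment of the simply-typed λ-calculus with sums. -/
inductive HasTy : List Ty → LTm → Ty → Prop
  | var {Γ n A} : Γ[n]? = some A → HasTy Γ (.var n) A
  | lam {Γ t A B} : HasTy (A :: Γ) t B → HasTy Γ (.lam t) (.arrow A B)
  | app {Γ t u A B} : HasTy Γ t (.arrow A B) → HasTy Γ u A → HasTy Γ (.app t u) B
  | injl {Γ t A B} : HasTy Γ t A → HasTy Γ (.injl t) (.sum A B)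
  | injr {Γ t A B} : HasTy Γ t B → HasTy Γ (.injr t) (.sum A B)
  | case {Γ t u₁ u₂ A B C} : HasTy Γ t (.sum A B) → HasTy (A :: Γ) u₁ C →
      HasTy (B :: Γ) u₂ C → HasTy Γ (.case t u₁ u₂) C

/-- Call-by-value compilation of λ-terms into the μμ̃ machine:
⟦t u⟧ = μα.⟨⟦u⟧ | μ̃v.⟨⟦t⟧ | v·α⟩⟩, the other constructs as before. -/
def translV : LTm → MTm
  | .var n => .var n
  | .lam t => .muPair (.conf (translV t) (.covar 0))
  | .app t u =>
      .mu (.conf (translV u)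
        (.mutilde (.conf (MTm.rename Nat.succ id (translV t))
          (.cons (.var 0) (.covar 0)))))
  | .injl t => .injl (translV t)
  | .injr t => .injr (translV t)
  | .case t u₁ u₂ =>
      .mu (.conf (translV t)
        (.case (.conf (translV u₁) (.covar 0)) (.conf (translV u₂) (.covar 0))))

/-- Orthogonal of a set of terms. -/
def orthC (pole : MMach → Prop) (S : Set MTm) : Set MCo :=
  {e | ∀ t ∈ S, pole (.conf t e)}

/-- Orthogonal of a set of co-terms. -/
def orthT (pole : MMach → Prop) (S : Set MCo) : Set MTm :=
  {t | ∀ e ∈ S, pole (.conf t e)}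

mutual
/-- Call-by-value truth witnesses |A|:
for arrows, |A→B| = (‖A→B‖v)⊥ with ‖A→B‖v = { v·e | v ∈ |A|v, e ∈ ‖B‖ }
(truth *value* witnesses for the argument); for positive types (base, sums),
|A| = (|A|v)⊥⊥. Throughout, ‖B‖ = |B|⊥. -/
def tru (pole : MMach → Prop) (baseTruv : Set MTm) : Ty → Set MTm
  | .base => orthT pole (orthC pole baseTruv)
  | .arrow A B =>
      orthT pole {c | ∃ v e, c = .cons v e ∧ v ∈ truv pole baseTruv A ∧
        e ∈ orthC pole (tru pole baseTruv B)}
  | .sum A B =>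
      orthT pole (orthC pole
        {t | (∃ u, t = .injl u ∧ u ∈ tru pole baseTruv A) ∨
             (∃ u, t = .injr u ∧ u ∈ tru pole baseTruv B)})
/-- Truth value witnesses |A|v: for positive types they are the defining sets
of values; for the negative arrow type, |N|v = |N|. -/
def truv (pole : MMach → Prop) (baseTruv : Set MTm) : Ty → Set MTm
  | .base => baseTruv
  | .arrow A B =>
      orthT pole {c | ∃ v e, c = .cons v e ∧ v ∈ truv pole baseTruv A ∧
        e ∈ orthC pole (tru pole baseTruv B)}
  | .sum A B =>
      {t | (∃ u, t = .injl u ∧ u ∈ tru pole baseTruv A) ∨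
           (∃ u, t = .injr u ∧ u ∈ tru pole baseTruv B)}
end

/-! The theorem is proved for all substitutions at once, by induction on the typing derivation.
Each machine construct obeys a realizability rule: a `μ`-, `μ(x·α)`- or `μ̃`-abstraction, or a
`case` co-term, lies in the relevant orthogonal as soon as each of its one-step reducts lies in the
pole, because the pole is closed under anti-reduction. These rules are uniform in the type because
`|A| = (|A|v)⊥⊥` holds for negative types too (a triple orthogonal is a single one). What is left
is to compute the reducts of a substituted translation, which is the usual de Bruijn substitution
algebra. -/

theorem liftN_comp {f₁ f₂ f : ℕ → ℕ} (hf : ∀ n, f₂ (f₁ n) = f n) :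
    ∀ n, liftN f₂ (liftN f₁ n) = liftN f n
  | 0 => rfl
  | n + 1 => congrArg Nat.succ (hf n)

mutual
theorem MTm.rename_rename {f₁ g₁ f₂ g₂ f g : ℕ → ℕ}
    (hf : ∀ n, f₂ (f₁ n) = f n) (hg : ∀ n, g₂ (g₁ n) = g n) :
    ∀ t : MTm, (t.rename f₁ g₁).rename f₂ g₂ = t.rename f g
  | .var n => by simp [MTm.rename, hf]
  | .mu m => by simp [MTm.rename, MMach.rename_rename hf (liftN_comp hg) m]
  | .muPair m => by
      simp [MTm.rename, MMach.rename_rename (liftN_comp hf) (liftN_comp hg) m]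
  | .injl t => by simp [MTm.rename, MTm.rename_rename hf hg t]
  | .injr t => by simp [MTm.rename, MTm.rename_rename hf hg t]
theorem MCo.rename_rename {f₁ g₁ f₂ g₂ f g : ℕ → ℕ}
    (hf : ∀ n, f₂ (f₁ n) = f n) (hg : ∀ n, g₂ (g₁ n) = g n) :
    ∀ e : MCo, (e.rename f₁ g₁).rename f₂ g₂ = e.rename f g
  | .covar n => by simp [MCo.rename, hg]
  | .cons t e => by simp [MCo.rename, MTm.rename_rename hf hg t, MCo.rename_rename hf hg e]
  | .mutilde m => by simp [MCo.rename, MMach.rename_rename (liftN_comp hf) hg m]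
  | .case m₁ m₂ => by
      simp [MCo.rename, MMach.rename_rename (liftN_comp hf) hg m₁,
        MMach.rename_rename (liftN_comp hf) hg m₂]
theorem MMach.rename_rename {f₁ g₁ f₂ g₂ f g : ℕ → ℕ}
    (hf : ∀ n, f₂ (f₁ n) = f n) (hg : ∀ n, g₂ (g₁ n) = g n) :
    ∀ m : MMach, (m.rename f₁ g₁).rename f₂ g₂ = m.rename f g
  | .conf t e => by simp [MMach.rename, MTm.rename_rename hf hg t, MCo.rename_rename hf hg e]
end

section SubstRename
variable {f g : ℕ → ℕ} {σt τt : ℕ → MTm} {σc τc : ℕ → MCo}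

theorem upC_fst_subst_rename (ht : ∀ n, σt (f n) = τt n) (σc τc : ℕ → MCo) (n : ℕ) :
    (upC σt σc).1 (f n) = (upC τt τc).1 n :=
  congrArg (MTm.rename id Nat.succ) (ht n)

theorem upC_snd_subst_rename (hc : ∀ n, σc (g n) = τc n) (σt τt : ℕ → MTm) :
    ∀ n, (upC σt σc).2 (liftN g n) = (upC τt τc).2 n
  | 0 => rfl
  | n + 1 => congrArg (MCo.rename id Nat.succ) (hc n)

theorem upT_fst_subst_rename (ht : ∀ n, σt (f n) = τt n) (σc τc : ℕ → MCo) :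
    ∀ n, (upT σt σc).1 (liftN f n) = (upT τt τc).1 n
  | 0 => rfl
  | n + 1 => congrArg (MTm.rename Nat.succ id) (ht n)

theorem upT_snd_subst_rename (hc : ∀ n, σc (g n) = τc n) (σt τt : ℕ → MTm) (n : ℕ) :
    (upT σt σc).2 (g n) = (upT τt τc).2 n :=
  congrArg (MCo.rename Nat.succ id) (hc n)

end SubstRename

mutual
theorem MTm.subst_rename {f g : ℕ → ℕ} {σt τt : ℕ → MTm} {σc τc : ℕ → MCo}
    (ht : ∀ n, σt (f n) = τt n) (hc : ∀ n, σc (g n) = τc n) :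
    ∀ t : MTm, (t.rename f g).subst σt σc = t.subst τt τc
  | .var n => by simp [MTm.rename, MTm.subst, ht]
  | .mu m => by
      simp [MTm.rename, MTm.subst,
        MMach.subst_rename (upC_fst_subst_rename ht σc τc) (upC_snd_subst_rename hc σt τt) m]
  | .muPair m => by
      simp only [MTm.rename, MTm.subst]
      exact congrArg MTm.muPair (MMach.subst_rename
        (upT_fst_subst_rename (upC_fst_subst_rename ht σc τc) _ _)
        (upT_snd_subst_rename (upC_snd_subst_rename hc σt τt) _ _) m)
  | .injl t => by simp [MTm.rename, MTm.subst, MTm.subst_rename ht hc t]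
  | .injr t => by simp [MTm.rename, MTm.subst, MTm.subst_rename ht hc t]
theorem MCo.subst_rename {f g : ℕ → ℕ} {σt τt : ℕ → MTm} {σc τc : ℕ → MCo}
    (ht : ∀ n, σt (f n) = τt n) (hc : ∀ n, σc (g n) = τc n) :
    ∀ e : MCo, (e.rename f g).subst σt σc = e.subst τt τc
  | .covar n => by simp [MCo.rename, MCo.subst, hc]
  | .cons t e => by
      simp [MCo.rename, MCo.subst, MTm.subst_rename ht hc t, MCo.subst_rename ht hc e]
  | .mutilde m => by
      simp [MCo.rename, MCo.subst,
        MMach.subst_rename (upT_fst_subst_rename ht σc τc) (upT_snd_subst_rename hc σt τt) m]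
  | .case m₁ m₂ => by
      simp [MCo.rename, MCo.subst,
        MMach.subst_rename (upT_fst_subst_rename ht σc τc) (upT_snd_subst_rename hc σt τt) m₁,
        MMach.subst_rename (upT_fst_subst_rename ht σc τc) (upT_snd_subst_rename hc σt τt) m₂]
theorem MMach.subst_rename {f g : ℕ → ℕ} {σt τt : ℕ → MTm} {σc τc : ℕ → MCo}
    (ht : ∀ n, σt (f n) = τt n) (hc : ∀ n, σc (g n) = τc n) :
    ∀ m : MMach, (m.rename f g).subst σt σc = m.subst τt τc
  | .conf t e => by
      simp [MMach.rename, MMach.subst, MTm.subst_rename ht hc t, MCo.subst_rename ht hc e]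
end

theorem MTm.rename_rename_comm {f₁ g₁ f₂ g₂ f₁' g₁' f₂' g₂' : ℕ → ℕ}
    (hf : ∀ n, f₂ (f₁ n) = f₂' (f₁' n)) (hg : ∀ n, g₂ (g₁ n) = g₂' (g₁' n))
    (t : MTm) :
    (t.rename f₁ g₁).rename f₂ g₂ = (t.rename f₁' g₁').rename f₂' g₂' :=
  (MTm.rename_rename hf hg t).trans (MTm.rename_rename (fun _ => rfl) (fun _ => rfl) t).symm

theorem MCo.rename_rename_comm {f₁ g₁ f₂ g₂ f₁' g₁' f₂' g₂' : ℕ → ℕ}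
    (hf : ∀ n, f₂ (f₁ n) = f₂' (f₁' n)) (hg : ∀ n, g₂ (g₁ n) = g₂' (g₁' n))
    (e : MCo) :
    (e.rename f₁ g₁).rename f₂ g₂ = (e.rename f₁' g₁').rename f₂' g₂' :=
  (MCo.rename_rename hf hg e).trans (MCo.rename_rename (fun _ => rfl) (fun _ => rfl) e).symm

section RenameSubst
variable {f g : ℕ → ℕ} {σt τt : ℕ → MTm} {σc τc : ℕ → MCo}

theorem upC_fst_rename_subst (ht : ∀ n, (σt n).rename f g = τt n) (σc τc : ℕ → MCo)
    (n : ℕ) :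
    ((upC σt σc).1 n).rename f (liftN g) = (upC τt τc).1 n := by
  show ((σt n).rename id Nat.succ).rename f (liftN g) = (τt n).rename id Nat.succ
  rw [← ht n]
  exact MTm.rename_rename_comm (fun _ => by rfl) (fun _ => by rfl) _

theorem upC_snd_rename_subst (hc : ∀ n, (σc n).rename f g = τc n) (σt τt : ℕ → MTm) :
    ∀ n, ((upC σt σc).2 n).rename f (liftN g) = (upC τt τc).2 n
  | 0 => rfl
  | n + 1 => by
    show ((σc n).rename id Nat.succ).rename f (liftN g) = (τc n).rename id Nat.succ
    rw [← hc n]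
    exact MCo.rename_rename_comm (fun _ => by rfl) (fun _ => by rfl) _

theorem upT_fst_rename_subst (ht : ∀ n, (σt n).rename f g = τt n) (σc τc : ℕ → MCo) :
    ∀ n, ((upT σt σc).1 n).rename (liftN f) g = (upT τt τc).1 n
  | 0 => rfl
  | n + 1 => by
    show ((σt n).rename Nat.succ id).rename (liftN f) g = (τt n).rename Nat.succ id
    rw [← ht n]
    exact MTm.rename_rename_comm (fun _ => by rfl) (fun _ => by rfl) _

theorem upT_snd_rename_subst (hc : ∀ n, (σc n).rename f g = τc n) (σt τt : ℕ → MTm)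
    (n : ℕ) :
    ((upT σt σc).2 n).rename (liftN f) g = (upT τt τc).2 n := by
  show ((σc n).rename Nat.succ id).rename (liftN f) g = (τc n).rename Nat.succ id
  rw [← hc n]
  exact MCo.rename_rename_comm (fun _ => by rfl) (fun _ => by rfl) _

end RenameSubst

mutual
theorem MTm.rename_subst {f g : ℕ → ℕ} {σt τt : ℕ → MTm} {σc τc : ℕ → MCo}
    (ht : ∀ n, (σt n).rename f g = τt n) (hc : ∀ n, (σc n).rename f g = τc n) :
    ∀ t : MTm, (t.subst σt σc).rename f g = t.subst τt τc
  | .var n => by simp [MTm.subst, ht]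
  | .mu m => by
      simp [MTm.rename, MTm.subst,
        MMach.rename_subst (upC_fst_rename_subst ht σc τc) (upC_snd_rename_subst hc σt τt) m]
  | .muPair m => by
      simp only [MTm.rename, MTm.subst]
      exact congrArg MTm.muPair (MMach.rename_subst
        (upT_fst_rename_subst (upC_fst_rename_subst ht σc τc) _ _)
        (upT_snd_rename_subst (upC_snd_rename_subst hc σt τt) _ _) m)
  | .injl t => by simp [MTm.rename, MTm.subst, MTm.rename_subst ht hc t]
  | .injr t => by simp [MTm.rename, MTm.subst, MTm.rename_subst ht hc t]
theorem MCo.rename_subst {f g : ℕ → ℕ} {σt τt : ℕ → MTm} {σc τc : ℕ → MCo}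
    (ht : ∀ n, (σt n).rename f g = τt n) (hc : ∀ n, (σc n).rename f g = τc n) :
    ∀ e : MCo, (e.subst σt σc).rename f g = e.subst τt τc
  | .covar n => by simp [MCo.subst, hc]
  | .cons t e => by
      simp [MCo.rename, MCo.subst, MTm.rename_subst ht hc t, MCo.rename_subst ht hc e]
  | .mutilde m => by
      simp [MCo.rename, MCo.subst,
        MMach.rename_subst (upT_fst_rename_subst ht σc τc) (upT_snd_rename_subst hc σt τt) m]
  | .case m₁ m₂ => by
      simp [MCo.rename, MCo.subst,
        MMach.rename_subst (upT_fst_rename_subst ht σc τc) (upT_snd_rename_subst hc σt τt) m₁,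
        MMach.rename_subst (upT_fst_rename_subst ht σc τc) (upT_snd_rename_subst hc σt τt) m₂]
theorem MMach.rename_subst {f g : ℕ → ℕ} {σt τt : ℕ → MTm} {σc τc : ℕ → MCo}
    (ht : ∀ n, (σt n).rename f g = τt n) (hc : ∀ n, (σc n).rename f g = τc n) :
    ∀ m : MMach, (m.subst σt σc).rename f g = m.subst τt τc
  | .conf t e => by
      simp [MMach.rename, MMach.subst, MTm.rename_subst ht hc t, MCo.rename_subst ht hc e]
end

theorem MTm.subst_rename_comm {f g : ℕ → ℕ} {σt τt : ℕ → MTm} {σc τc : ℕ → MCo}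
    (ht : ∀ n, σt (f n) = (τt n).rename f g) (hc : ∀ n, σc (g n) = (τc n).rename f g)
    (t : MTm) : (t.rename f g).subst σt σc = (t.subst τt τc).rename f g :=
  (MTm.subst_rename ht hc t).trans (MTm.rename_subst (fun _ => rfl) (fun _ => rfl) t).symm

theorem MCo.subst_rename_comm {f g : ℕ → ℕ} {σt τt : ℕ → MTm} {σc τc : ℕ → MCo}
    (ht : ∀ n, σt (f n) = (τt n).rename f g) (hc : ∀ n, σc (g n) = (τc n).rename f g)
    (e : MCo) : (e.rename f g).subst σt σc = (e.subst τt τc).rename f g :=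
  (MCo.subst_rename ht hc e).trans (MCo.rename_subst (fun _ => rfl) (fun _ => rfl) e).symm

section SubstSubst
variable {σt τt ρt : ℕ → MTm} {σc τc ρc : ℕ → MCo}

theorem upC_fst_subst_subst (ht : ∀ n, (σt n).subst τt τc = ρt n) (σc ρc : ℕ → MCo)
    (n : ℕ) :
    ((upC σt σc).1 n).subst (upC τt τc).1 (upC τt τc).2 = (upC ρt ρc).1 n := by
  show ((σt n).rename id Nat.succ).subst _ _ = (ρt n).rename id Nat.succ
  rw [← ht n]
  exact MTm.subst_rename_comm (fun _ => by rfl) (fun _ => by rfl) _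

theorem upC_snd_subst_subst (hc : ∀ n, (σc n).subst τt τc = ρc n) (σt ρt : ℕ → MTm) :
    ∀ n, ((upC σt σc).2 n).subst (upC τt τc).1 (upC τt τc).2 = (upC ρt ρc).2 n
  | 0 => rfl
  | n + 1 => by
    show ((σc n).rename id Nat.succ).subst _ _ = (ρc n).rename id Nat.succ
    rw [← hc n]
    exact MCo.subst_rename_comm (fun _ => by rfl) (fun _ => by rfl) _

theorem upT_fst_subst_subst (ht : ∀ n, (σt n).subst τt τc = ρt n) (σc ρc : ℕ → MCo) :
    ∀ n, ((upT σt σc).1 n).subst (upT τt τc).1 (upT τt τc).2 = (upT ρt ρc).1 n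
  | 0 => rfl
  | n + 1 => by
    show ((σt n).rename Nat.succ id).subst _ _ = (ρt n).rename Nat.succ id
    rw [← ht n]
    exact MTm.subst_rename_comm (fun _ => by rfl) (fun _ => by rfl) _

theorem upT_snd_subst_subst (hc : ∀ n, (σc n).subst τt τc = ρc n) (σt ρt : ℕ → MTm)
    (n : ℕ) :
    ((upT σt σc).2 n).subst (upT τt τc).1 (upT τt τc).2 = (upT ρt ρc).2 n := by
  show ((σc n).rename Nat.succ id).subst _ _ = (ρc n).rename Nat.succ id
  rw [← hc n]
  exact MCo.subst_rename_comm (fun _ => by rfl) (fun _ => by rfl) _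

end SubstSubst

mutual
theorem MTm.subst_subst {σt τt ρt : ℕ → MTm} {σc τc ρc : ℕ → MCo}
    (ht : ∀ n, (σt n).subst τt τc = ρt n) (hc : ∀ n, (σc n).subst τt τc = ρc n) :
    ∀ t : MTm, (t.subst σt σc).subst τt τc = t.subst ρt ρc
  | .var n => by simp [MTm.subst, ht]
  | .mu m => by
      simp [MTm.subst, MMach.subst_subst (upC_fst_subst_subst ht σc ρc)
        (upC_snd_subst_subst hc σt ρt) m]
  | .muPair m => by
      simp only [MTm.subst]
      exact congrArg MTm.muPair (MMach.subst_subst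
        (upT_fst_subst_subst (upC_fst_subst_subst ht σc ρc) _ _)
        (upT_snd_subst_subst (upC_snd_subst_subst hc σt ρt) _ _) m)
  | .injl t => by simp [MTm.subst, MTm.subst_subst ht hc t]
  | .injr t => by simp [MTm.subst, MTm.subst_subst ht hc t]
theorem MCo.subst_subst {σt τt ρt : ℕ → MTm} {σc τc ρc : ℕ → MCo}
    (ht : ∀ n, (σt n).subst τt τc = ρt n) (hc : ∀ n, (σc n).subst τt τc = ρc n) :
    ∀ e : MCo, (e.subst σt σc).subst τt τc = e.subst ρt ρc
  | .covar n => by simp [MCo.subst, hc]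
  | .cons t e => by simp [MCo.subst, MTm.subst_subst ht hc t, MCo.subst_subst ht hc e]
  | .mutilde m => by
      simp [MCo.subst, MMach.subst_subst (upT_fst_subst_subst ht σc ρc)
        (upT_snd_subst_subst hc σt ρt) m]
  | .case m₁ m₂ => by
      simp [MCo.subst,
        MMach.subst_subst (upT_fst_subst_subst ht σc ρc) (upT_snd_subst_subst hc σt ρt) m₁,
        MMach.subst_subst (upT_fst_subst_subst ht σc ρc) (upT_snd_subst_subst hc σt ρt) m₂]
theorem MMach.subst_subst {σt τt ρt : ℕ → MTm} {σc τc ρc : ℕ → MCo}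
    (ht : ∀ n, (σt n).subst τt τc = ρt n) (hc : ∀ n, (σc n).subst τt τc = ρc n) :
    ∀ m : MMach, (m.subst σt σc).subst τt τc = m.subst ρt ρc
  | .conf t e => by simp [MMach.subst, MTm.subst_subst ht hc t, MCo.subst_subst ht hc e]
end

section SubstId
variable {σt : ℕ → MTm} {σc : ℕ → MCo}

theorem upC_fst_eq_var (ht : ∀ n, σt n = .var n) (σc : ℕ → MCo) (n : ℕ) :
    (upC σt σc).1 n = .var n :=
  congrArg (MTm.rename id Nat.succ) (ht n)

theorem upC_snd_eq_covar (hc : ∀ n, σc n = .covar n) (σt : ℕ → MTm) :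
    ∀ n, (upC σt σc).2 n = .covar n
  | 0 => rfl
  | n + 1 => congrArg (MCo.rename id Nat.succ) (hc n)

theorem upT_fst_eq_var (ht : ∀ n, σt n = .var n) (σc : ℕ → MCo) :
    ∀ n, (upT σt σc).1 n = .var n
  | 0 => rfl
  | n + 1 => congrArg (MTm.rename Nat.succ id) (ht n)

theorem upT_snd_eq_covar (hc : ∀ n, σc n = .covar n) (σt : ℕ → MTm) (n : ℕ) :
    (upT σt σc).2 n = .covar n :=
  congrArg (MCo.rename Nat.succ id) (hc n)

end SubstId

mutual
theorem MTm.subst_eq_self {σt : ℕ → MTm} {σc : ℕ → MCo}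
    (ht : ∀ n, σt n = .var n) (hc : ∀ n, σc n = .covar n) : ∀ t : MTm, t.subst σt σc = t
  | .var n => ht n
  | .mu m => congrArg MTm.mu
      (MMach.subst_eq_self (upC_fst_eq_var ht σc) (upC_snd_eq_covar hc σt) m)
  | .muPair m => congrArg MTm.muPair (MMach.subst_eq_self
      (upT_fst_eq_var (upC_fst_eq_var ht σc) _) (upT_snd_eq_covar (upC_snd_eq_covar hc σt) _) m)
  | .injl t => congrArg MTm.injl (MTm.subst_eq_self ht hc t)
  | .injr t => congrArg MTm.injr (MTm.subst_eq_self ht hc t)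
theorem MCo.subst_eq_self {σt : ℕ → MTm} {σc : ℕ → MCo}
    (ht : ∀ n, σt n = .var n) (hc : ∀ n, σc n = .covar n) : ∀ e : MCo, e.subst σt σc = e
  | .covar n => hc n
  | .cons t e => by simp [MCo.subst, MTm.subst_eq_self ht hc t, MCo.subst_eq_self ht hc e]
  | .mutilde m => congrArg MCo.mutilde
      (MMach.subst_eq_self (upT_fst_eq_var ht σc) (upT_snd_eq_covar hc σt) m)
  | .case m₁ m₂ => by
      simp [MCo.subst, MMach.subst_eq_self (upT_fst_eq_var ht σc) (upT_snd_eq_covar hc σt) m₁,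
        MMach.subst_eq_self (upT_fst_eq_var ht σc) (upT_snd_eq_covar hc σt) m₂]
theorem MMach.subst_eq_self {σt : ℕ → MTm} {σc : ℕ → MCo}
    (ht : ∀ n, σt n = .var n) (hc : ∀ n, σc n = .covar n) : ∀ m : MMach, m.subst σt σc = m
  | .conf t e => by simp [MMach.subst, MTm.subst_eq_self ht hc t, MCo.subst_eq_self ht hc e]
end

theorem MTm.subst_rename_eq_self {f g : ℕ → ℕ} {σt : ℕ → MTm} {σc : ℕ → MCo}
    (ht : ∀ n, σt (f n) = .var n) (hc : ∀ n, σc (g n) = .covar n) (t : MTm) :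
    (t.rename f g).subst σt σc = t :=
  (MTm.subst_rename ht hc t).trans (MTm.subst_eq_self (fun _ => rfl) (fun _ => rfl) t)

theorem MCo.subst_rename_eq_self {f g : ℕ → ℕ} {σt : ℕ → MTm} {σc : ℕ → MCo}
    (ht : ∀ n, σt (f n) = .var n) (hc : ∀ n, σc (g n) = .covar n) (e : MCo) :
    (e.rename f g).subst σt σc = e :=
  (MCo.subst_rename ht hc e).trans (MCo.subst_eq_self (fun _ => rfl) (fun _ => rfl) e)

def scons {α : Type} (a : α) (σ : ℕ → α) : ℕ → α
  | 0 => a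
  | n + 1 => σ n

theorem MTm.subst_scons_rename_succ (v : MTm) (σ : ℕ → MTm) (κ : ℕ → MCo) (t : MTm) :
    (t.rename Nat.succ id).subst (scons v σ) κ = t.subst σ κ :=
  MTm.subst_rename (fun _ => rfl) (fun _ => rfl) t

theorem MMach.substCo_subst_upC (σ : ℕ → MTm) (κ : ℕ → MCo) (m : MMach) (e : MCo) :
    (m.subst (upC σ κ).1 (upC σ κ).2).substCo e = m.subst σ (scons e κ) := by
  refine MMach.subst_subst (fun n => ?_) (fun n => ?_) m
  · exact MTm.subst_rename_eq_self (fun _ => by rfl) (fun _ => by rfl) (σ n)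
  · cases n with
    | zero => rfl
    | succ n => exact MCo.subst_rename_eq_self (fun _ => by rfl) (fun _ => by rfl) (κ n)

theorem MMach.substTm_subst_upT (σ : ℕ → MTm) (κ : ℕ → MCo) (m : MMach) (v : MTm) :
    (m.subst (upT σ κ).1 (upT σ κ).2).substTm v = m.subst (scons v σ) κ := by
  refine MMach.subst_subst (fun n => ?_) (fun n => ?_) m
  · cases n with
    | zero => rfl
    | succ n => exact MTm.subst_rename_eq_self (fun _ => by rfl) (fun _ => by rfl) (σ n)
  · exact MCo.subst_rename_eq_self (fun _ => by rfl) (fun _ => by rfl) (κ n)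

theorem MMach.substTmCo_subst_upT_upC (σ : ℕ → MTm) (κ : ℕ → MCo) (m : MMach) (v : MTm)
    (e : MCo) :
    (m.subst (upT (upC σ κ).1 (upC σ κ).2).1
        (upT (upC σ κ).1 (upC σ κ).2).2).substTmCo v e =
      m.subst (scons v σ) (scons e κ) := by
  refine MMach.subst_subst (fun n => ?_) (fun n => ?_) m
  · cases n with
    | zero => rfl
    | succ n =>
      show (((σ n).rename id Nat.succ).rename Nat.succ id).subst _ _ = σ n
      rw [MTm.rename_rename (fun _ => rfl) (fun _ => rfl)]
      exact MTm.subst_rename_eq_self (fun _ => by rfl) (fun _ => by rfl) (σ n)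
  · cases n with
    | zero => rfl
    | succ n =>
      show (((κ n).rename id Nat.succ).rename Nat.succ id).subst _ _ = κ n
      rw [MCo.rename_rename (fun _ => rfl) (fun _ => rfl)]
      exact MCo.subst_rename_eq_self (fun _ => by rfl) (fun _ => by rfl) (κ n)

def AntiReductionClosed (pole : MMach → Prop) : Prop :=
  ∀ m m', StepM m m' → pole m' → pole m

section Realizability
variable {pole : MMach → Prop} {baseTruv : Set MTm}

theorem tru_eq_orthT_orthC_truv (A : Ty) :
    tru pole baseTruv A = orthT pole (orthC pole (truv pole baseTruv A)) := by
  cases A with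
  | base => rfl
  | arrow A B => exact (lowerPolar_upperPolar_lowerPolar (r := fun t e => pole (.conf t e)) _).symm
  | sum A B => rfl

theorem mem_tru_iff {A : Ty} {t : MTm} :
    t ∈ tru pole baseTruv A ↔
      ∀ e ∈ orthC pole (truv pole baseTruv A), pole (.conf t e) := by
  rw [tru_eq_orthT_orthC_truv]
  rfl

theorem truv_subset_tru (A : Ty) : truv pole baseTruv A ⊆ tru pole baseTruv A :=
  fun t ht => mem_tru_iff.mpr fun _ he => he t ht

theorem orthC_tru (A : Ty) :
    orthC pole (tru pole baseTruv A) = orthC pole (truv pole baseTruv A) := by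
  rw [tru_eq_orthT_orthC_truv]
  exact upperPolar_lowerPolar_upperPolar (r := fun t e => pole (.conf t e)) _

theorem injl_mem_tru_sum {A B : Ty} {u : MTm} (hu : u ∈ tru pole baseTruv A) :
    MTm.injl u ∈ tru pole baseTruv (.sum A B) :=
  truv_subset_tru _ (Or.inl ⟨u, rfl, hu⟩)

theorem injr_mem_tru_sum {A B : Ty} {u : MTm} (hu : u ∈ tru pole baseTruv B) :
    MTm.injr u ∈ tru pole baseTruv (.sum A B) :=
  truv_subset_tru _ (Or.inr ⟨u, rfl, hu⟩)

theorem mu_mem_tru (hpole : AntiReductionClosed pole) {m : MMach} {A : Ty}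
    (h : ∀ e ∈ orthC pole (truv pole baseTruv A), pole (m.substCo e)) :
    MTm.mu m ∈ tru pole baseTruv A :=
  mem_tru_iff.mpr fun e he => hpole _ _ (.mu m e) (h e he)

theorem muPair_mem_tru_arrow (hpole : AntiReductionClosed pole) {m : MMach} {A B : Ty}
    (h : ∀ v ∈ truv pole baseTruv A, ∀ e ∈ orthC pole (tru pole baseTruv B),
      pole (m.substTmCo v e)) :
    MTm.muPair m ∈ tru pole baseTruv (.arrow A B) := by
  rintro _ ⟨v, e, rfl, hv, he⟩
  exact hpole _ _ (.muPair m v e) (h v hv e he)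

theorem mutilde_mem_orthC (hpole : AntiReductionClosed pole) {m : MMach} {S : Set MTm}
    (h : ∀ v ∈ S, pole (m.substTm v)) : MCo.mutilde m ∈ orthC pole S :=
  fun v hv => hpole _ _ (.mutilde v m) (h v hv)

theorem case_mem_orthC_truv_sum (hpole : AntiReductionClosed pole) {m₁ m₂ : MMach} {A B : Ty}
    (h₁ : ∀ u ∈ tru pole baseTruv A, pole (m₁.substTm u))
    (h₂ : ∀ u ∈ tru pole baseTruv B, pole (m₂.substTm u)) :
    MCo.case m₁ m₂ ∈ orthC pole (truv pole baseTruv (.sum A B)) := by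
  rintro _ (⟨u, rfl, hu⟩ | ⟨u, rfl, hu⟩)
  · exact hpole _ _ (.casel u m₁ m₂) (h₁ u hu)
  · exact hpole _ _ (.caser u m₁ m₂) (h₂ u hu)

theorem scons_mem_tru {Γ : List Ty} {A : Ty} {v : MTm} {σ : ℕ → MTm}
    (hv : v ∈ tru pole baseTruv A)
    (hσ : ∀ n B, Γ[n]? = some B → σ n ∈ tru pole baseTruv B) :
    ∀ n B, (A :: Γ)[n]? = some B → scons v σ n ∈ tru pole baseTruv B
  | 0, _, h => Option.some.inj h ▸ hv
  | n + 1, B, h => hσ n B h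

end Realizability

/- Environments are taken in `|B|` rather than `|B|v` so that the induction goes through the
`case` rule, whose branches bind the payload of an injection, known only to lie in `|A|`.
The co-substitution `κ` is arbitrary because each `μ`-step extends it by the current context. -/
theorem subst_translV_mem_tru {pole : MMach → Prop} {baseTruv : Set MTm}
    (hpole : AntiReductionClosed pole) {Γ : List Ty} {t : LTm} {A : Ty} (ht : HasTy Γ t A) :
    ∀ (σ : ℕ → MTm) (κ : ℕ → MCo),
      (∀ n B, Γ[n]? = some B → σ n ∈ tru pole baseTruv B) →
      MTm.subst σ κ (translV t) ∈ tru pole baseTruv A := by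
  induction ht with
  | var h => exact fun σ _ hσ => hσ _ _ h
  | lam _ ih =>
    intro σ κ hσ
    refine muPair_mem_tru_arrow hpole fun v hv e he => ?_
    rw [MMach.substTmCo_subst_upT_upC]
    exact he _ (ih _ _ (scons_mem_tru (truv_subset_tru _ hv) hσ))
  | app _ _ ihf iha =>
    intro σ κ hσ
    refine mu_mem_tru hpole fun e he => ?_
    rw [MMach.substCo_subst_upC]
    refine mem_tru_iff.mp (iha σ _ hσ) _ (mutilde_mem_orthC hpole fun v hv => ?_)
    rw [MMach.substTm_subst_upT]
    have hf := ihf σ (scons e κ) hσ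
    rw [← MTm.subst_scons_rename_succ v] at hf
    exact hf _ ⟨v, e, rfl, hv, (orthC_tru _).symm ▸ he⟩
  | injl _ ih => exact fun σ κ hσ => injl_mem_tru_sum (ih σ κ hσ)
  | injr _ ih => exact fun σ κ hσ => injr_mem_tru_sum (ih σ κ hσ)
  | case _ _ _ ih ih₁ ih₂ =>
    intro σ κ hσ
    refine mu_mem_tru hpole fun e he => ?_
    rw [MMach.substCo_subst_upC]
    refine mem_tru_iff.mp (ih σ _ hσ) _
      (case_mem_orthC_truv_sum hpole (fun u hu => ?_) (fun u hu => ?_))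
    · rw [MMach.substTm_subst_upT]
      exact mem_tru_iff.mp (ih₁ _ (scons e κ) (scons_mem_tru hu hσ)) e he
    · rw [MMach.substTm_subst_upT]
      exact mem_tru_iff.mp (ih₂ _ (scons e κ) (scons_mem_tru hu hσ)) e he

/-- Call-by-value adequacy: if Γ ⊢ t : A and σ maps each (x:B) ∈ Γ to a truth
*value* witness of B, then the call-by-value translation satisfies
⟦t⟧[σ] ∈ |A|, for any pole closed under anti-reduction. -/
theorem adequacy_cbv (pole : MMach → Prop)
    (hpole : ∀ m m', StepM m m' → pole m' → pole m)
    (baseTruv : Set MTm)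
    {Γ : List Ty} {t : LTm} {A : Ty} (ht : HasTy Γ t A)
    (σ : Nat → MTm) (hσ : ∀ n B, Γ[n]? = some B → σ n ∈ truv pole baseTruv B) :
    MTm.subst σ MCo.covar (translV t) ∈ tru pole baseTruv A :=
  subst_translV_mem_tru hpole ht σ MCo.covar fun n B h => truv_subset_tru B (hσ n B h)
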